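/- Nishimori gauge identity for a single bond correlation: for every bond b ∈ B, [⟨S_b⟩] = [⟨S_b⟩²]; in particular the quenched bond correlation [⟨S_b⟩] is nonnegative. -/

import Mathlib

/-!
The gauge transformation `j_c ↦ τ_c j_c`, with `τ_c` the bond spin of a configuration `τ`, maps
the coupling law of means `x` to that of means `τ x`, which has density
`exp (U(j,τ) - Σ_c x_c j_c)` with respect to it (Cameron–Martin, using `τ_c² = 1`).
Under this change of variables `⟨S_b⟩` picks up the sign `τ_b` while `⟨S_b⟩²` is invariant.
Averaging over all `τ` turns the densities into `Σ_τ τ_b e^{U(j,τ)} = ⟨S_b⟩ Z` and `Z`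
respectively, so `2^|V| [⟨S_b⟩]` and `2^|V| [⟨S_b⟩²]` both equal `[⟨S_b⟩² Z e^{-Σ_c x_c j_c}]`.
-/

open MeasureTheory ProbabilityTheory Filter

noncomputable section

/-- The real value ±1 of a Boolean spin. -/
def spin (s : Bool) : ℝ := if s then 1 else -1

/-- The bond spin `S_b = S_n S_{n'}` for a bond `b` with endpoints `ep b = (n, n')`. -/
def bondSpin {V ι : Type*} (ep : ι → V × V) (S : V → Bool) (b : ι) : ℝ :=
  spin (S (ep b).1) * spin (S (ep b).2)

/-- The potential `U(j, S) = Σ_b x_b j_b S_b`. -/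
def potential {V ι : Type*} [Fintype ι] (ep : ι → V × V) (x j : ι → ℝ)
    (S : V → Bool) : ℝ :=
  ∑ b, x b * j b * bondSpin ep S b

/-- The partition function `Z(j) = Σ_S exp U(j,S)`. -/
def partitionFn {V ι : Type*} [Fintype V] [DecidableEq V] [Fintype ι]
    (ep : ι → V × V) (x j : ι → ℝ) : ℝ :=
  ∑ S : V → Bool, Real.exp (potential ep x j S)

/-- The Boltzmann–Gibbs expectation `⟨f⟩` at fixed disorder `j`. -/
def gibbs {V ι : Type*} [Fintype V] [DecidableEq V] [Fintype ι]
    (ep : ι → V × V) (x j : ι → ℝ) (f : (V → Bool) → ℝ) : ℝ :=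
  (∑ S : V → Bool, f S * Real.exp (potential ep x j S)) / partitionFn ep x j

/-- The law of the couplings: independent Gaussians, `j_b` of mean `x_b` and variance 1. -/
def couplings {ι : Type*} [Fintype ι] (x : ι → ℝ) : Measure (ι → ℝ) :=
  Measure.pi fun b => gaussianReal (x b) 1

/-- The quenched average `[F]`. -/
def quenched {ι : Type*} [Fintype ι] (x : ι → ℝ) (F : (ι → ℝ) → ℝ) : ℝ :=
  ∫ j, F j ∂(couplings x)

/-- The quenched pressure `P({x}) = [ln Z]`. -/
def pressure {V ι : Type*} [Fintype V] [DecidableEq V] [Fintype ι]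
    (ep : ι → V × V) (x : ι → ℝ) : ℝ :=
  quenched x fun j => Real.log (partitionFn ep x j)

open scoped ENNReal NNReal

lemma ProbabilityTheory.gaussianReal_add_eq_withDensity (m a : ℝ) {v : ℝ≥0} (hv : v ≠ 0) :
    gaussianReal (m + a) v = (gaussianReal m v).withDensity
      fun t => ENNReal.ofReal (Real.exp (a * (t - m) / v - a ^ 2 / (2 * v))) := by
  rw [gaussianReal_of_var_ne_zero _ hv, gaussianReal_of_var_ne_zero _ hv,
    ← withDensity_mul _ (measurable_gaussianPDF _ _) (by fun_prop)]
  congr 1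
  funext t
  simp only [Pi.mul_apply, gaussianPDF, gaussianPDFReal, ← ENNReal.ofReal_mul
    (mul_nonneg (inv_nonneg.2 (Real.sqrt_nonneg _)) (Real.exp_pos _).le), mul_assoc,
    ← Real.exp_add]
  congr 4
  field_simp
  ring

section ProductMeasure

variable {ι : Type*} [Fintype ι] {X : ι → Type*} [∀ i, MeasurableSpace (X i)]
  {μ : ∀ i, Measure (X i)} [∀ i, IsProbabilityMeasure (μ i)] {g : ∀ i, X i → ℝ≥0∞}

lemma MeasureTheory.lintegral_pi_prod_eq_prod (hg : ∀ i, Measurable (g i)) :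
    ∫⁻ ω, ∏ i, g i (ω i) ∂Measure.pi μ = ∏ i, ∫⁻ t, g i t ∂μ i := by
  rw [lintegral_prod_eq_prod_lintegral_of_indepFun _ _
    (iIndepFun_pi fun i => (hg i).aemeasurable) fun i => (hg i).comp (measurable_pi_apply i)]
  exact Finset.prod_congr rfl fun i _ => (measurePreserving_eval μ i).lintegral_comp (hg i)

lemma MeasureTheory.Measure.pi_withDensity (hg : ∀ i, Measurable (g i))
    [∀ i, SigmaFinite ((μ i).withDensity (g i))] :
    Measure.pi (fun i => (μ i).withDensity (g i)) =
      (Measure.pi μ).withDensity fun ω => ∏ i, g i (ω i) := by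
  refine Measure.pi_eq fun s hs => ?_
  have hind : (Set.univ.pi s).indicator (fun ω => ∏ i, g i (ω i)) =
      fun ω => ∏ i, (s i).indicator (g i) (ω i) := by
    funext ω
    classical
    simp only [Set.indicator_apply, Set.mem_univ_pi]
    split_ifs with hω
    · exact Finset.prod_congr rfl fun i _ => by rw [if_pos (hω i)]
    · obtain ⟨i, hi⟩ := not_forall.1 hω
      exact (Finset.prod_eq_zero (Finset.mem_univ i) (if_neg hi)).symm
  rw [withDensity_apply _ (.univ_pi hs), ← lintegral_indicator (.univ_pi hs), hind,
    lintegral_pi_prod_eq_prod fun i => (hg i).indicator (hs i)]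
  exact Finset.prod_congr rfl fun i _ => by
    rw [lintegral_indicator (hs i), withDensity_apply _ (hs i)]

end ProductMeasure

section Couplings

variable {ι : Type*} [Fintype ι] (x : ι → ℝ)

instance : IsProbabilityMeasure (couplings x) := by
  unfold couplings; infer_instance

lemma couplings_add_eq_withDensity (a : ι → ℝ) :
    couplings (x + a) = (couplings x).withDensity
      fun j => ENNReal.ofReal (Real.exp (∑ c, (a c * (j c - x c) - a c ^ 2 / 2))) := by
  have htilt : ∀ c, gaussianReal (x c + a c) 1 = (gaussianReal (x c) 1).withDensity
      fun t => ENNReal.ofReal (Real.exp (a c * (t - x c) - a c ^ 2 / 2)) := fun c => by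
    simpa using gaussianReal_add_eq_withDensity (x c) (a c) one_ne_zero
  have : ∀ c, SigmaFinite ((gaussianReal (x c) 1).withDensity
      fun t => ENNReal.ofReal (Real.exp (a c * (t - x c) - a c ^ 2 / 2))) := fun c => by
    rw [← htilt c]; infer_instance
  simp only [couplings, Pi.add_apply, htilt]
  rw [Measure.pi_withDensity fun c => by fun_prop]
  congr 1
  funext j
  rw [Real.exp_sum, ENNReal.ofReal_prod_of_nonneg fun c _ => (Real.exp_pos _).le]

variable {s : ι → ℝ}

lemma couplings_map_mul (hs : ∀ c, s c ^ 2 = 1) :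
    (couplings x).map (s * ·) = couplings (s * x) := by
  rw [couplings, couplings, show (s * ·) = fun (j : ι → ℝ) c => s c * j c from rfl,
    Measure.pi_map_pi fun c => by fun_prop]
  congr 1
  funext c
  rw [gaussianReal_map_const_mul]
  congr
  ext
  simp [hs c]

lemma couplings_map_mul_eq_withDensity (hs : ∀ c, s c ^ 2 = 1) :
    (couplings x).map (s * ·) = (couplings x).withDensity
      fun j => ENNReal.ofReal (Real.exp (∑ c, (s c - 1) * x c * j c)) := by
  rw [couplings_map_mul x hs, show s * x = x + (s - 1) * x by ring,
    couplings_add_eq_withDensity]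
  congr 1
  funext j
  congr 2
  refine Finset.sum_congr rfl fun c _ => ?_
  simp only [Pi.mul_apply, Pi.sub_apply, Pi.one_apply]
  linear_combination (-x c ^ 2 / 2) * hs c

lemma integral_couplings_comp_mul (hs : ∀ c, s c ^ 2 = 1) {F : (ι → ℝ) → ℝ}
    (hF : Measurable F) :
    ∫ j, F (s * j) ∂couplings x =
      ∫ j, Real.exp (∑ c, (s c - 1) * x c * j c) * F j ∂couplings x := by
  rw [← integral_map (by fun_prop) hF.aestronglyMeasurable,
    couplings_map_mul_eq_withDensity x hs,
    integral_withDensity_eq_integral_toReal_smul (by fun_prop)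
      (ae_of_all _ fun _ => ENNReal.ofReal_lt_top)]
  simp only [ENNReal.toReal_ofReal (Real.exp_pos _).le, smul_eq_mul]

lemma integrable_couplings_exp_mul (hs : ∀ c, s c ^ 2 = 1) {F : (ι → ℝ) → ℝ}
    (hF : Measurable F) {C : ℝ} (hFC : ∀ j, |F j| ≤ C) :
    Integrable (fun j => Real.exp (∑ c, (s c - 1) * x c * j c) * F j) (couplings x) := by
  have : IsProbabilityMeasure ((couplings x).map (s * ·)) :=
    Measure.isProbabilityMeasure_map (by fun_prop)
  have hint : Integrable F ((couplings x).map (s * ·)) :=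
    .of_bound hF.aestronglyMeasurable C (ae_of_all _ hFC)
  rw [couplings_map_mul_eq_withDensity x hs, integrable_withDensity_iff (by fun_prop)
    (ae_of_all _ fun _ => ENNReal.ofReal_lt_top)] at hint
  simpa only [ENNReal.toReal_ofReal (Real.exp_pos _).le, mul_comm] using hint

end Couplings

lemma spin_beq (a b : Bool) : spin (a == b) = spin a * spin b := by
  cases a <;> cases b <;> norm_num [spin]

lemma spin_sq (a : Bool) : spin a ^ 2 = 1 := by
  cases a <;> norm_num [spin]

section Gauge

variable {V ι : Type*} (ep : ι → V × V)

lemma bondSpin_sq (S : V → Bool) (c : ι) : bondSpin ep S c ^ 2 = 1 := by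
  rw [bondSpin, mul_pow, spin_sq, spin_sq, one_mul]

lemma bondSpin_beq (τ S : V → Bool) (c : ι) :
    bondSpin ep (fun n => τ n == S n) c = bondSpin ep τ c * bondSpin ep S c := by
  simp only [bondSpin, spin_beq]
  ring

lemma beq_involutive (τ : V → Bool) :
    Function.Involutive fun (S : V → Bool) n => τ n == S n :=
  fun S => funext fun n => by dsimp only; cases τ n <;> cases S n <;> rfl

variable [Fintype ι] (x : ι → ℝ)

lemma potential_gauge (j : ι → ℝ) (τ S : V → Bool) :
    potential ep x (bondSpin ep τ * j) S = potential ep x j (fun n => τ n == S n) := by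
  simp only [potential, bondSpin_beq, Pi.mul_apply]
  exact Finset.sum_congr rfl fun c _ => by ring

variable [Fintype V] [DecidableEq V]

lemma sum_mul_exp_potential_gauge (j : ι → ℝ) (τ : V → Bool) (f : (V → Bool) → ℝ) :
    ∑ S, f S * Real.exp (potential ep x (bondSpin ep τ * j) S) =
      ∑ S, f (fun n => τ n == S n) * Real.exp (potential ep x j S) :=
  Fintype.sum_bijective _ (beq_involutive τ).bijective _ _ fun S => by
    rw [potential_gauge]
    congr 2
    exact (beq_involutive τ S).symm

lemma partitionFn_pos (j : ι → ℝ) : 0 < partitionFn ep x j :=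
  Finset.sum_pos (fun _ _ => Real.exp_pos _) Finset.univ_nonempty

lemma gibbs_mul_partitionFn (j : ι → ℝ) (f : (V → Bool) → ℝ) :
    gibbs ep x j f * partitionFn ep x j = ∑ S, f S * Real.exp (potential ep x j S) :=
  div_mul_cancel₀ _ (partitionFn_pos ep x j).ne'

lemma gibbs_const_mul (j : ι → ℝ) (a : ℝ) (f : (V → Bool) → ℝ) :
    gibbs ep x j (fun S => a * f S) = a * gibbs ep x j f := by
  simp only [gibbs, mul_assoc, ← Finset.mul_sum, mul_div_assoc]

lemma gibbs_gauge (j : ι → ℝ) (τ : V → Bool) (f : (V → Bool) → ℝ) :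
    gibbs ep x (bondSpin ep τ * j) f = gibbs ep x j fun S => f fun n => τ n == S n := by
  have hZ := sum_mul_exp_potential_gauge ep x j τ fun _ => 1
  simp only [one_mul] at hZ
  rw [gibbs, gibbs, partitionFn, partitionFn, hZ, sum_mul_exp_potential_gauge]

lemma gibbs_bondSpin_gauge (j : ι → ℝ) (τ : V → Bool) (b : ι) :
    gibbs ep x (bondSpin ep τ * j) (fun S => bondSpin ep S b) =
      bondSpin ep τ b * gibbs ep x j (fun S => bondSpin ep S b) := by
  simp only [gibbs_gauge, bondSpin_beq, gibbs_const_mul]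

lemma abs_gibbs_le (j : ι → ℝ) {f : (V → Bool) → ℝ} {C : ℝ} (hf : ∀ S, |f S| ≤ C) :
    |gibbs ep x j f| ≤ C := by
  have hZ := partitionFn_pos ep x j
  rw [gibbs, abs_div, abs_of_pos hZ, div_le_iff₀ hZ, partitionFn, Finset.mul_sum]
  refine (Finset.abs_sum_le_sum_abs _ _).trans (Finset.sum_le_sum fun S _ => ?_)
  rw [abs_mul, Real.abs_exp]
  exact mul_le_mul_of_nonneg_right (hf S) (Real.exp_pos _).le

lemma continuous_gibbs (f : (V → Bool) → ℝ) : Continuous fun j => gibbs ep x j f := by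
  have hU : ∀ S, Continuous fun j => potential ep x j S := fun S => by
    unfold potential; fun_prop
  exact .div (by fun_prop) (by unfold partitionFn; fun_prop)
    fun j => (partitionFn_pos ep x j).ne'

lemma card_mul_quenched_eq_of_gauge_covariant {F : (ι → ℝ) → ℝ} (hF : Measurable F)
    {C : ℝ} (hFC : ∀ j, |F j| ≤ C) (ε : (V → Bool) → ℝ) (hε : ∀ τ, ε τ ^ 2 = 1)
    (hcov : ∀ τ j, F (bondSpin ep τ * j) = ε τ * F j) :
    Fintype.card (V → Bool) * quenched x F =
      ∫ j, F j * (∑ τ, ε τ * Real.exp (potential ep x j τ)) / Real.exp (∑ c, x c * j c)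
        ∂couplings x := by
  have hweight : ∀ τ j, ∑ c, (bondSpin ep τ c - 1) * x c * j c =
      potential ep x j τ - ∑ c, x c * j c := fun τ j => by
    rw [potential, ← Finset.sum_sub_distrib]
    exact Finset.sum_congr rfl fun c _ => by ring
  have hgauge : ∀ τ, quenched x F = ∫ j, ε τ *
      (Real.exp (∑ c, (bondSpin ep τ c - 1) * x c * j c) * F j) ∂couplings x := fun τ => by
    rw [integral_const_mul, ← integral_couplings_comp_mul x (bondSpin_sq ep τ) hF]
    simp only [hcov, integral_const_mul, ← mul_assoc, ← sq, hε, one_mul]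
    rfl
  calc (Fintype.card (V → Bool) : ℝ) * quenched x F = ∑ τ : V → Bool, quenched x F := by
        simp
    _ = ∑ τ, ∫ j, ε τ *
          (Real.exp (∑ c, (bondSpin ep τ c - 1) * x c * j c) * F j) ∂couplings x :=
        Finset.sum_congr rfl fun τ _ => hgauge τ
    _ = _ := by
        rw [← integral_finsetSum _ fun τ _ =>
          (integrable_couplings_exp_mul x (bondSpin_sq ep τ) hF hFC).const_mul _]
        refine integral_congr_ae (ae_of_all _ fun j => ?_)
        simp only [hweight, Real.exp_sub, Finset.mul_sum, Finset.sum_div]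
        exact Finset.sum_congr rfl fun τ _ => by ring

end Gauge

theorem nishimori_one_bond_identity_general
    {V ι : Type*} [Fintype V] [DecidableEq V] [Fintype ι]
    (ep : ι → V × V)
    (x : ι → ℝ) (b : ι) :
    quenched x (fun j => gibbs ep x j (fun S => bondSpin ep S b)) =
      quenched x (fun j => (gibbs ep x j (fun S => bondSpin ep S b)) ^ 2) ∧
    0 ≤ quenched x (fun j => gibbs ep x j (fun S => bondSpin ep S b)) := by
  set G := fun j => gibbs ep x j (fun S => bondSpin ep S b)
  have hG : Measurable G := (continuous_gibbs ep x _).measurable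
  have hG_le : ∀ j, |G j| ≤ 1 := fun j =>
    abs_gibbs_le ep x j fun S => (sq_le_one_iff_abs_le_one _).1 (bondSpin_sq ep S b).le
  have hlin := card_mul_quenched_eq_of_gauge_covariant ep x hG hG_le (fun τ => bondSpin ep τ b)
    (fun τ => bondSpin_sq ep τ b) (fun τ j => gibbs_bondSpin_gauge ep x j τ b)
  have hsq := card_mul_quenched_eq_of_gauge_covariant ep x (hG.pow_const 2) (C := 1)
    (fun j => by rw [abs_pow]; exact pow_le_one₀ (abs_nonneg _) (hG_le j)) (fun _ => 1)
    (fun _ => one_pow 2) fun τ j => by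
      simp only [G, gibbs_bondSpin_gauge, mul_pow, bondSpin_sq, one_mul]
  have hkey : quenched x G = quenched x (G · ^ 2) := by
    refine mul_left_cancel₀ (Nat.cast_ne_zero.2 (Fintype.card_ne_zero (α := V → Bool))) ?_
    rw [hlin, hsq]
    refine integral_congr_ae (ae_of_all _ fun j => ?_)
    simp only [one_mul]
    rw [← gibbs_mul_partitionFn, ← partitionFn]
    ring
  exact ⟨hkey, hkey ▸ integral_nonneg fun j => sq_nonneg (G j)⟩

/-- Nishimori gauge identity for a single bond correlation:
for every bond `b`, `[⟨S_b⟩] = [⟨S_b⟩²]`; in particular `[⟨S_b⟩] ≥ 0`. -/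
theorem nishimori_one_bond_identity
    {V ι : Type*} [Fintype V] [DecidableEq V] [Fintype ι]
    (ep : ι → V × V) (hep : ∀ b, (ep b).1 ≠ (ep b).2)
    (x : ι → ℝ) (hx : ∀ b, 0 ≤ x b) (b : ι) :
    quenched x (fun j => gibbs ep x j (fun S => bondSpin ep S b)) =
      quenched x (fun j => (gibbs ep x j (fun S => bondSpin ep S b)) ^ 2) ∧
    0 ≤ quenched x (fun j => gibbs ep x j (fun S => bondSpin ep S b)) :=
  nishimori_one_bond_identity_general ep x b

end
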